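/- D_d^{(0)} equals the union of the sets P_r over all r ∈ D_d^{(0)}, and this union is disjoint: for r, s ∈ ℝ^d, the sets P_r and P_s are either equal or disjoint. -/

import Mathlib

open scoped BigOperators

/-- Inner product of a real parameter vector with an integer vector. -/
noncomputable def dotp {d : ℕ} (r : Fin d → ℝ) (a : Fin d → ℤ) : ℝ := ∑ j, r j * (a j : ℝ)

/-- The shift radix system map τ_r. -/
noncomputable def tau {d : ℕ} (r : Fin d → ℝ) (a : Fin d → ℤ) : Fin d → ℤ :=
  fun i => if h : (i : ℕ) + 1 < d then a ⟨(i : ℕ) + 1, h⟩ else -⌊dotp r a⌋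

/-- τ_r^* := -τ_r ∘ (-id). -/
noncomputable def tauStar {d : ℕ} (r : Fin d → ℝ) (a : Fin d → ℤ) : Fin d → ℤ :=
  -(tau r (-a))

/-- D_d^{(0)}: parameters with the finiteness property. -/
def D0 (d : ℕ) : Set (Fin d → ℝ) :=
  {r | ∀ a : Fin d → ℤ, ∃ n : ℕ, (tau r)^[n] a = 0}

/-- D_d: parameters with all orbits eventually periodic. -/
def Dset (d : ℕ) : Set (Fin d → ℝ) :=
  {r | ∀ a : Fin d → ℤ, ∃ m n : ℕ, m ≠ n ∧ (tau r)^[m] a = (tau r)^[n] a}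

/-- The iteration producing the set of witnesses. -/
def Vseq {d : ℕ} (r : Fin d → ℝ) : ℕ → Set (Fin d → ℤ)
  | 0 => {v | ∃ j : Fin d, v = Pi.single j 1 ∨ v = -Pi.single j 1}
  | n + 1 => Vseq r n ∪ (tau r '' Vseq r n) ∪ (tauStar r '' Vseq r n)

/-- The set of witnesses associated with r. -/
def Vr {d : ℕ} (r : Fin d → ℝ) : Set (Fin d → ℤ) := ⋃ n, Vseq r n

/-- The polyhedron P_r of parameters acting like r on the witnesses of r. -/
def Pr {d : ℕ} (r : Fin d → ℝ) : Set (Fin d → ℝ) :=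
  {s | ∀ a ∈ Vr r, tau s a = tau r a ∧ tauStar s a = tauStar r a}

section Aux

variable {d : ℕ}

lemma dotp_add (s : Fin d → ℝ) (a b : Fin d → ℤ) :
    dotp s (a + b) = dotp s a + dotp s b := by
  simp only [dotp, Pi.add_apply, Int.cast_add, mul_add, Finset.sum_add_distrib]

lemma dotp_neg (s : Fin d → ℝ) (a : Fin d → ℤ) : dotp s (-a) = -dotp s a := by
  simp [dotp, Finset.sum_neg_distrib]

lemma tauStar_apply_last (s : Fin d → ℝ) (u : Fin d → ℤ) (i : Fin d)
    (hi : ¬ ((i : ℕ) + 1 < d)) : tauStar s u i = -⌈dotp s u⌉ := by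
  simp only [tauStar, Pi.neg_apply, tau, dif_neg hi, dotp_neg, Int.floor_neg, neg_neg]

lemma tauStar_apply_lt (s : Fin d → ℝ) (u : Fin d → ℤ) (i : Fin d)
    (hi : (i : ℕ) + 1 < d) : tauStar s u i = u ⟨(i : ℕ) + 1, hi⟩ := by
  simp only [tauStar, Pi.neg_apply, tau, dif_pos hi, Pi.neg_apply, neg_neg]

lemma tau_add_or (s : Fin d → ℝ) (x u : Fin d → ℤ) :
    tau s (x + u) = tau s x + tau s u ∨ tau s (x + u) = tau s x + tauStar s u := by
  have hc : dotp s (x + u) = dotp s x + dotp s u := dotp_add s x u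
  set c := dotp s x with hcdef
  set y := dotp s u with hydef
  have h1 : ⌊c⌋ + ⌊y⌋ ≤ ⌊c + y⌋ := by
    apply Int.le_floor.mpr
    push_cast
    exact add_le_add (Int.floor_le c) (Int.floor_le y)
  have h2 : ⌊c + y⌋ ≤ ⌊c⌋ + ⌈y⌉ := by
    calc ⌊c + y⌋ ≤ ⌊c + (⌈y⌉ : ℝ)⌋ :=
          Int.floor_le_floor (by linarith [Int.le_ceil y])
      _ = ⌊c⌋ + ⌈y⌉ := Int.floor_add_intCast c _
  have h3 : ⌈y⌉ ≤ ⌊y⌋ + 1 := Int.ceil_le_floor_add_one y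
  have h4 : ⌊y⌋ ≤ ⌈y⌉ := Int.floor_le_ceil y
  have hd : ⌊c + y⌋ = ⌊c⌋ + ⌊y⌋ ∨ ⌊c + y⌋ = ⌊c⌋ + ⌈y⌉ := by omega
  rcases hd with hd | hd
  · left; funext i
    by_cases hi : (i : ℕ) + 1 < d
    · simp [tau, dif_pos hi, Pi.add_apply]
    · simp only [tau, dif_neg hi, Pi.add_apply, hc, ← hcdef, ← hydef, hd]
      omega
  · right; funext i
    by_cases hi : (i : ℕ) + 1 < d
    · simp [tau, dif_pos hi, Pi.add_apply, tauStar_apply_lt s u i hi]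
    · simp only [tau, dif_neg hi, Pi.add_apply, hc, ← hcdef, ← hydef, hd,
        tauStar_apply_last s u i hi]
      omega

/-- One evolution step of a decomposition, keeping the head `x` "pure". -/
lemma evolve (s : Fin d → ℝ) :
    ∀ (T : List (Fin d → ℤ)) (x : Fin d → ℤ),
    ∃ T' : List (Fin d → ℤ), T'.length = T.length ∧
      (∀ w ∈ T', ∃ u ∈ T, w = tau s u ∨ w = tauStar s u) ∧
      tau s (x + T.sum) = tau s x + T'.sum := by
  intro T
  induction T with
  | nil => intro x; exact ⟨[], rfl, by simp, by simp⟩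
  | cons u T ih =>
    intro x
    obtain ⟨T', hlen, hmem, hsum⟩ := ih (x + u)
    have hassoc : x + (u :: T).sum = (x + u) + T.sum := by
      rw [List.sum_cons, add_assoc]
    rcases tau_add_or s x u with h | h
    · refine ⟨tau s u :: T', by simp [hlen], ?_, ?_⟩
      · intro w hw
        rcases List.mem_cons.mp hw with hw | hw
        · exact ⟨u, List.mem_cons_self, Or.inl hw⟩
        · obtain ⟨u', hu', h'⟩ := hmem w hw
          exact ⟨u', List.mem_cons_of_mem _ hu', h'⟩
      · rw [hassoc, hsum, h, List.sum_cons, add_assoc]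
    · refine ⟨tauStar s u :: T', by simp [hlen], ?_, ?_⟩
      · intro w hw
        rcases List.mem_cons.mp hw with hw | hw
        · exact ⟨u, List.mem_cons_self, Or.inr hw⟩
        · obtain ⟨u', hu', h'⟩ := hmem w hw
          exact ⟨u', List.mem_cons_of_mem _ hu', h'⟩
      · rw [hassoc, hsum, h, List.sum_cons, add_assoc]

lemma tau_neg (s : Fin d → ℝ) (a : Fin d → ℤ) : tau s (-a) = -(tauStar s a) := by
  simp [tauStar]

lemma tauStar_neg (s : Fin d → ℝ) (a : Fin d → ℤ) : tauStar s (-a) = -(tau s a) := by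
  simp [tauStar]

lemma mem_Vr_of_seed {r : Fin d → ℝ} {u : Fin d → ℤ}
    (h : ∃ j : Fin d, u = Pi.single j 1 ∨ u = -Pi.single j 1) : u ∈ Vr r :=
  Set.mem_iUnion.mpr ⟨0, h⟩

lemma Vr_closed {r : Fin d → ℝ} {a : Fin d → ℤ} (h : a ∈ Vr r) :
    tau r a ∈ Vr r ∧ tauStar r a ∈ Vr r := by
  obtain ⟨n, hn⟩ := Set.mem_iUnion.mp h
  constructor
  · exact Set.mem_iUnion.mpr ⟨n + 1, Or.inl (Or.inr ⟨a, hn, rfl⟩)⟩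
  · exact Set.mem_iUnion.mpr ⟨n + 1, Or.inr ⟨a, hn, rfl⟩⟩

/-- Signed witnesses. -/
def SW {d : ℕ} (r : Fin d → ℝ) : Set (Fin d → ℤ) := {u | u ∈ Vr r ∨ -u ∈ Vr r}

lemma self_mem_Pr (r : Fin d → ℝ) : r ∈ Pr r := fun _ _ => ⟨rfl, rfl⟩

lemma tau_eq_of_SW {r s : Fin d → ℝ} (hs : s ∈ Pr r) {u : Fin d → ℤ} (hu : u ∈ SW r) :
    tau s u = tau r u ∧ tauStar s u = tauStar r u := by
  rcases hu with h | h
  · exact hs u h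
  · constructor
    · have e : u = -(-u) := (neg_neg u).symm
      rw [e, tau_neg s (-u), tau_neg r (-u), (hs _ h).2]
    · have e : u = -(-u) := (neg_neg u).symm
      rw [e, tauStar_neg s (-u), tauStar_neg r (-u), (hs _ h).1]

lemma SW_closed {r s : Fin d → ℝ} (hs : s ∈ Pr r) {u : Fin d → ℤ} (hu : u ∈ SW r) :
    tau s u ∈ SW r ∧ tauStar s u ∈ SW r := by
  obtain ⟨h1, h2⟩ := tau_eq_of_SW hs hu
  rw [h1, h2]
  rcases hu with h | h
  · exact ⟨Or.inl (Vr_closed h).1, Or.inl (Vr_closed h).2⟩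
  · constructor
    · refine Or.inr ?_
      have : -(tau r u) = tauStar r (-u) := (tauStar_neg r u).symm
      rw [this]; exact (Vr_closed h).2
    · refine Or.inr ?_
      have : -(tauStar r u) = tau r (-u) := (tau_neg r u).symm
      rw [this]; exact (Vr_closed h).1

lemma SW_iter {r : Fin d → ℝ} {u : Fin d → ℤ} (hu : u ∈ SW r) (n : ℕ) :
    (tau r)^[n] u ∈ SW r := by
  induction n with
  | zero => exact hu
  | succ n ih =>
    rw [Function.iterate_succ_apply']
    exact (SW_closed (self_mem_Pr r) ih).1

/-- Any integer vector is a sum of signed unit vectors. -/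
lemma exists_seed_list :
    ∀ (a : Fin d → ℤ), ∃ L : List (Fin d → ℤ),
      (∀ u ∈ L, ∃ j : Fin d, u = Pi.single j 1 ∨ u = -Pi.single j 1) ∧ L.sum = a := by
  suffices h : ∀ (n : ℕ) (a : Fin d → ℤ), (∑ j, (a j).natAbs) = n →
      ∃ L : List (Fin d → ℤ),
        (∀ u ∈ L, ∃ j : Fin d, u = Pi.single j 1 ∨ u = -Pi.single j 1) ∧ L.sum = a by
    intro a; exact h _ a rfl
  intro n
  induction n using Nat.strong_induction_on with
  | _ n ih =>
    intro a ha
    rcases Nat.eq_zero_or_pos n with hn | hn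
    · refine ⟨[], by simp, ?_⟩
      have : ∀ j, (a j).natAbs = 0 := by
        intro j
        have := Finset.sum_eq_zero_iff.mp (ha.trans hn)
        exact this j (Finset.mem_univ j)
      funext j
      have := this j
      simp only [List.sum_nil, Pi.zero_apply]
      omega
    · have hex : ∃ j, a j ≠ 0 := by
        by_contra hcon
        push_neg at hcon
        have : (∑ j, (a j).natAbs) = 0 := by
          apply Finset.sum_eq_zero; intro j _; rw [hcon j]; rfl
        omega
      obtain ⟨j, hj⟩ := hex
      set e : Fin d → ℤ := if 0 < a j then Pi.single j 1 else -Pi.single j 1 with he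
      have hej : e j = if 0 < a j then 1 else -1 := by
        by_cases h : 0 < a j <;> simp [he, h]
      have hek : ∀ k, k ≠ j → e k = 0 := by
        intro k hk
        by_cases h : 0 < a j <;> simp [he, h, Pi.single_eq_of_ne hk]
      set a' : Fin d → ℤ := a - e with ha'
      have hsum' : (∑ k, (a' k).natAbs) = n - 1 := by
        have hsplit : ∀ (b : Fin d → ℤ), (∑ k, (b k).natAbs)
            = (b j).natAbs + ∑ k ∈ Finset.univ.erase j, (b k).natAbs := by
          intro b
          rw [← Finset.add_sum_erase _ _ (Finset.mem_univ j)]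
        have h1 := hsplit a
        have h2 := hsplit a'
        have h3 : ∑ k ∈ Finset.univ.erase j, (a' k).natAbs
            = ∑ k ∈ Finset.univ.erase j, (a k).natAbs := by
          apply Finset.sum_congr rfl
          intro k hk
          have hk' : k ≠ j := Finset.ne_of_mem_erase hk
          simp [ha', hek k hk']
        have h4 : (a' j).natAbs = (a j).natAbs - 1 ∧ 1 ≤ (a j).natAbs := by
          simp only [ha', Pi.sub_apply, hej]
          by_cases h : 0 < a j <;> simp [h] <;> omega
        omega
      have hlt : n - 1 < n := by omega
      obtain ⟨L, hL1, hL2⟩ := ih (n - 1) hlt a' hsum'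
      refine ⟨e :: L, ?_, ?_⟩
      · intro u hu
        rcases List.mem_cons.mp hu with hu | hu
        · refine ⟨j, ?_⟩
          by_cases h : 0 < a j
          · left; rw [hu, he, if_pos h]
          · right; rw [hu, he, if_neg h]
        · exact hL1 u hu
      · rw [List.sum_cons, hL2, ha']
        abel

/-- The key lemma: if all orbits of τ_r die and s ∈ P(r), then the τ_s-orbit of any
sum of signed witnesses dies. -/
lemma key {r s : Fin d → ℝ} (hr : r ∈ D0 d) (hs : s ∈ Pr r) :
    ∀ (N : ℕ) (L : List (Fin d → ℤ)), L.length ≤ N → (∀ u ∈ L, u ∈ SW r) →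
      ∃ n : ℕ, (tau s)^[n] L.sum = 0 := by
  intro N
  induction N with
  | zero =>
    intro L hL _
    have : L = [] := List.length_eq_zero_iff.mp (Nat.le_zero.mp hL)
    exact ⟨0, by simp [this]⟩
  | succ N ihN =>
    intro L hL hmem
    match L with
    | [] => exact ⟨0, by simp⟩
    | u0 :: T =>
      have hu0 : u0 ∈ SW r := hmem u0 (List.mem_cons_self)
      have hT : ∀ u ∈ T, u ∈ SW r := fun u hu => hmem u (List.mem_cons_of_mem _ hu)
      have seq : ∀ n : ℕ, ∃ U : List (Fin d → ℤ), U.length = T.length ∧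
          (∀ u ∈ U, u ∈ SW r) ∧
          (tau s)^[n] (u0 :: T).sum = (tau r)^[n] u0 + U.sum := by
        intro n
        induction n with
        | zero => exact ⟨T, rfl, hT, by simp [List.sum_cons]⟩
        | succ n ihn =>
          obtain ⟨U, hlen, hUmem, hsum⟩ := ihn
          obtain ⟨U', hlen', hmem', heq⟩ := evolve s U ((tau r)^[n] u0)
          have hx : (tau r)^[n] u0 ∈ SW r := SW_iter hu0 n
          refine ⟨U', hlen'.trans hlen, ?_, ?_⟩
          · intro w hw
            obtain ⟨u, hu, hcase⟩ := hmem' w hw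
            rcases hcase with h | h
            · rw [h]; exact (SW_closed hs (hUmem u hu)).1
            · rw [h]; exact (SW_closed hs (hUmem u hu)).2
          · rw [Function.iterate_succ_apply', hsum, heq,
              (tau_eq_of_SW hs hx).1]
            rw [Function.iterate_succ_apply' (tau r) n u0]
      obtain ⟨n0, hn0⟩ := hr u0
      obtain ⟨U, hlen, hUmem, hsum⟩ := seq n0
      rw [hn0, zero_add] at hsum
      have hlen' : U.length ≤ N := by
        have : T.length + 1 ≤ N + 1 := by
          simpa [List.length_cons] using hL
        omega
      obtain ⟨m, hm⟩ := ihN U hlen' hUmem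
      refine ⟨m + n0, ?_⟩
      rw [Function.iterate_add_apply, hsum, hm]

lemma mem_D0_of_mem_Pr {r s : Fin d → ℝ} (hr : r ∈ D0 d) (hs : s ∈ Pr r) :
    s ∈ D0 d := by
  intro a
  obtain ⟨L, hL1, hL2⟩ := exists_seed_list a
  have hmem : ∀ u ∈ L, u ∈ SW r := fun u hu => Or.inl (mem_Vr_of_seed (hL1 u hu))
  obtain ⟨n, hn⟩ := key hr hs L.length L le_rfl hmem
  exact ⟨n, by rw [← hL2]; exact hn⟩

lemma Pr_eq_of_mem {r t : Fin d → ℝ} (ht : t ∈ Pr r) : Pr t = Pr r := by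
  have hV : ∀ n, Vseq t n = Vseq r n := by
    intro n
    induction n with
    | zero => rfl
    | succ n ihn =>
      show Vseq t n ∪ (tau t '' Vseq t n) ∪ (tauStar t '' Vseq t n)
        = Vseq r n ∪ (tau r '' Vseq r n) ∪ (tauStar r '' Vseq r n)
      rw [ihn]
      have h1 : tau t '' Vseq r n = tau r '' Vseq r n := by
        apply Set.image_congr
        intro a ha
        exact (ht a (Set.mem_iUnion.mpr ⟨n, ha⟩)).1
      have h2 : tauStar t '' Vseq r n = tauStar r '' Vseq r n := by
        apply Set.image_congr
        intro a ha
        exact (ht a (Set.mem_iUnion.mpr ⟨n, ha⟩)).2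
      rw [h1, h2]
  have hVr : Vr t = Vr r := Set.iUnion_congr hV
  ext x
  constructor
  · intro hx a ha
    have hxa := hx a (hVr.symm ▸ ha)
    obtain ⟨h1, h2⟩ := ht a ha
    exact ⟨hxa.1.trans h1, hxa.2.trans h2⟩
  · intro hx a ha
    have ha' : a ∈ Vr r := hVr ▸ ha
    have hxa := hx a ha'
    obtain ⟨h1, h2⟩ := ht a ha'
    exact ⟨hxa.1.trans h1.symm, hxa.2.trans h2.symm⟩

end Aux

theorem stmt8 (d : ℕ) :
    (D0 d = ⋃ r ∈ D0 d, Pr r) ∧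
    (∀ r s : Fin d → ℝ, Pr r = Pr s ∨ Disjoint (Pr r) (Pr s)) := by
  constructor
  · ext x
    constructor
    · intro hx
      exact Set.mem_biUnion hx (self_mem_Pr x)
    · intro hx
      obtain ⟨r, hr, hxr⟩ := Set.mem_iUnion₂.mp hx
      exact mem_D0_of_mem_Pr hr hxr
  · intro r s
    rcases Set.eq_empty_or_nonempty (Pr r ∩ Pr s) with h | h
    · right
      exact Set.disjoint_iff_inter_eq_empty.mpr h
    · left
      obtain ⟨t, htr, hts⟩ := h
      rw [← Pr_eq_of_mem htr, Pr_eq_of_mem hts]
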